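/- Let Z : ℤ² → {0,1} be a configuration, Λ a finite box, and ∂_I Λ its internal boundary. A path γ = ((i_0,j_0), ..., (i_m,j_m)) is increasing if each step increases exactly one coordinate by 1, and open if Z(i_k,j_k) = 1 for k = 1,...,m. Let ω(Λ) = {(i,j) ∈ ℤ² : there exists an open increasing path from (i,j) to some (k,l) ∈ ∂_I Λ} and B(Λ) = Λ ∪ ω(Λ). Then for every (i,j) in the internal boundary ∂_I B(Λ) of B(Λ), Z(i,j) = 0. -/
import Mathlib


/-- Increasing path in `ℤ²`: each step increases exactly one coordinate by `1`. -/
def IsIncPath (γ : ℕ → ℤ × ℤ) (m : ℕ) : Prop :=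
  ∀ k < m, γ (k + 1) = ((γ k).1 + 1, (γ k).2) ∨ γ (k + 1) = ((γ k).1, (γ k).2 + 1)

/-- An increasing path is open in the field `Z` if `Z = 1` (i.e. `true`) at every
vertex of the path except possibly the initial one. -/
def IsOpenPath (Z : ℤ × ℤ → Bool) (γ : ℕ → ℤ × ℤ) (m : ℕ) : Prop :=
  IsIncPath γ m ∧ ∀ k, 1 ≤ k → k ≤ m → Z (γ k) = true

/-- The internal boundary of `S ⊆ ℤ²`: vertices of `S` with at least one parent
(`(i−1,j)` or `(i,j−1)`) outside `S`. -/
def intBoundary (S : Set (ℤ × ℤ)) : Set (ℤ × ℤ) :=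
  {p | p ∈ S ∧ ((p.1 - 1, p.2) ∉ S ∨ (p.1, p.2 - 1) ∉ S)}

/-- The box `Λ_{m,n} = {1,...,m} × {1,...,n}`. -/
def box (m n : ℤ) : Set (ℤ × ℤ) :=
  {p | 1 ≤ p.1 ∧ p.1 ≤ m ∧ 1 ≤ p.2 ∧ p.2 ≤ n}

/-- `ω(Λ)`: the set of sites joined to the internal boundary of `Λ` by an open
increasing path in `Z`. -/
def omegaSet (Z : ℤ × ℤ → Bool) (Λ : Set (ℤ × ℤ)) : Set (ℤ × ℤ) :=
  {p | ∃ m, 0 < m ∧ ∃ γ : ℕ → ℤ × ℤ,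
    γ 0 = p ∧ γ m ∈ intBoundary Λ ∧ IsOpenPath Z γ m}

lemma parent_mem (Z : ℤ × ℤ → Bool) (Λ : Set (ℤ × ℤ)) (p q : ℤ × ℤ)
    (hp : p ∈ Λ ∪ omegaSet Z Λ) (hZ : Z p = true)
    (hq : p = (q.1 + 1, q.2) ∨ p = (q.1, q.2 + 1)) : q ∈ Λ ∪ omegaSet Z Λ := by
  rcases hp with hp | hp
  · by_cases hqΛ : q ∈ Λ
    · exact Or.inl hqΛ
    · -- p ∈ intBoundary Λ, so the one-step path q → p works
      right
      refine ⟨1, one_pos, fun k => if k = 0 then q else p, by simp, ?_, ?_, ?_⟩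
      · simp only [if_neg one_ne_zero]
        refine ⟨hp, ?_⟩
        rcases hq with h | h
        · left; rw [h]; simpa using hqΛ
        · right; rw [h]; simpa using hqΛ
      · intro k hk
        interval_cases k
        simpa using hq
      · intro k hk1 hk2
        interval_cases k
        simpa using hZ
  · obtain ⟨M, hM, γ, h0, hend, hinc, hopen⟩ := hp
    right
    refine ⟨M + 1, Nat.succ_pos _, fun k => if k = 0 then q else γ (k - 1),
      by simp, ?_, ?_, ?_⟩
    · simpa using hend
    · intro k hk
      rcases Nat.eq_zero_or_pos k with rfl | hkpos
      · simpa [h0] using hq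
      · have h1 : k ≠ 0 := hkpos.ne'
        have h2 : k + 1 ≠ 0 := Nat.succ_ne_zero k
        simp only [if_neg h1, if_neg h2, Nat.add_sub_cancel]
        have : k - 1 + 1 = k := Nat.succ_pred_eq_of_pos hkpos
        have h3 := hinc (k - 1) (by omega)
        rwa [this] at h3
    · intro k hk1 hk2
      have h1 : k ≠ 0 := by omega
      simp only [if_neg h1]
      rcases Nat.eq_or_lt_of_le hk1 with rfl | hk1'
      · simpa [h0] using hZ
      · exact hopen (k - 1) (by omega) (by omega)

/-- with `B(Λ) = Λ ∪ ω(Λ)`, every site of the internal boundary of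
`B(Λ)` carries the value `Z = 0`. -/
theorem stmt6 (Z : ℤ × ℤ → Bool) (m n : ℤ) (hm : 1 ≤ m) (hn : 1 ≤ n)
    (hfin : (box m n ∪ omegaSet Z (box m n)).Finite) :
    ∀ p ∈ intBoundary (box m n ∪ omegaSet Z (box m n)), Z p = false := by
  intro p hp
  obtain ⟨hpB, hbd⟩ := hp
  by_contra h
  have hZ : Z p = true := by simpa using h
  rcases hbd with hb | hb
  · exact hb (parent_mem Z (box m n) p (p.1 - 1, p.2) hpB hZ (Or.inl (by simp)))
  · exact hb (parent_mem Z (box m n) p (p.1, p.2 - 1) hpB hZ (Or.inr (by simp)))
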